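/- arXiv:2501.14108 — 6 statements merged into one kernel-verified Lean document; each statement's English description precedes it below -/
import Mathlib

section
/- Let T be a real symmetric trace-free 3×3 matrix and ξ ∈ ℝ³ a nonzero vector. If for all indices i,j,k ∈ {1,2,3} the symbol equation (1/3)(T_{ij}ξ_k + T_{ik}ξ_j + T_{jk}ξ_i) − (2/15)(Σ_l T_{lk}ξ_l δ_{ij} + Σ_l T_{lj}ξ_l δ_{ik} + Σ_l T_{li}ξ_l δ_{jk}) = 0 holds, then T = 0. (ℝ-ellipticity of the symmetric trace-free gradient on symmetric trace-free matrix fields in dimension 3.) -/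
/-!
Contract the symbol equation with `ξ` three times. The full contraction is
`(3/5) |ξ|² ⟨Tξ, ξ⟩`, so `⟨Tξ, ξ⟩ = 0`; the double contraction is
`(8/15) |ξ|² Tξ + (1/15) ⟨Tξ, ξ⟩ ξ`, so `Tξ = 0`; the single contraction is then
`(1/3) |ξ|² T`, so `T = 0`.
-/

open Finset Matrix

variable {ι 𝕜 : Type*} [Fintype ι] [Field 𝕜]

def stfGradSymbol [DecidableEq ι] (T : Matrix ι ι 𝕜) (ξ : ι → 𝕜) (i j k : ι) : 𝕜 :=
  (1/3 : 𝕜) * (T i j * ξ k + T i k * ξ j + T j k * ξ i)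
    - (2/15 : 𝕜) * ((∑ l, T l k * ξ l) * (if i = j then (1:𝕜) else 0)
      + (∑ l, T l j * ξ l) * (if i = k then (1:𝕜) else 0)
      + (∑ l, T l i * ξ l) * (if j = k then (1:𝕜) else 0))

theorem sum_apply_mul_eq_vecMul (T : Matrix ι ι 𝕜) (ξ : ι → 𝕜) (a : ι) :
    ∑ l, T l a * ξ l = (ξ ᵥ* T) a := by
  simp only [vecMul, dotProduct, mul_comm (ξ _)]

theorem Matrix.IsSymm.sum_mul_eq_vecMul {T : Matrix ι ι 𝕜} (hT : T.IsSymm) (ξ : ι → 𝕜) (a : ι) :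
    ∑ k, T a k * ξ k = (ξ ᵥ* T) a := by
  simp only [← hT.apply a, sum_apply_mul_eq_vecMul]

variable [DecidableEq ι] [CharZero 𝕜] {T : Matrix ι ι 𝕜}

theorem sum_stfGradSymbol_mul (hT : T.IsSymm) (ξ : ι → 𝕜) (i j : ι) :
    ∑ k, stfGradSymbol T ξ i j k * ξ k =
      1/3 * (ξ ⬝ᵥ ξ) * T i j + 1/5 * ((ξ ᵥ* T) i * ξ j + (ξ ᵥ* T) j * ξ i)
        - 2/15 * ((ξ ᵥ* T) ⬝ᵥ ξ) * (if i = j then 1 else 0) := by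
  set v := ξ ᵥ* T
  calc ∑ k, stfGradSymbol T ξ i j k * ξ k
      = ∑ k, (1/3 * T i j * (ξ k * ξ k) + 1/3 * ξ j * (T i k * ξ k) + 1/3 * ξ i * (T j k * ξ k)
          - 2/15 * (if i = j then 1 else 0) * (v k * ξ k)
          - 2/15 * v j * (if i = k then ξ k else 0) - 2/15 * v i * (if j = k then ξ k else 0)) := by
        refine sum_congr rfl fun k _ => ?_
        simp only [stfGradSymbol, sum_apply_mul_eq_vecMul, v]
        split_ifs <;> ring
    _ = _ := by
        simp only [sum_sub_distrib, sum_add_distrib, ← mul_sum, hT.sum_mul_eq_vecMul, sum_ite_eq,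
          mem_univ, if_true, dotProduct]
        ring

theorem sum_sum_stfGradSymbol_mul (hT : T.IsSymm) (ξ : ι → 𝕜) (i : ι) :
    ∑ j, (∑ k, stfGradSymbol T ξ i j k * ξ k) * ξ j =
      8/15 * (ξ ⬝ᵥ ξ) * (ξ ᵥ* T) i + 1/15 * ((ξ ᵥ* T) ⬝ᵥ ξ) * ξ i := by
  set v := ξ ᵥ* T
  calc ∑ j, (∑ k, stfGradSymbol T ξ i j k * ξ k) * ξ j
      = ∑ j, (1/3 * (ξ ⬝ᵥ ξ) * (T i j * ξ j) + 1/5 * v i * (ξ j * ξ j) + 1/5 * ξ i * (v j * ξ j)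
          - 2/15 * (v ⬝ᵥ ξ) * (if i = j then ξ j else 0)) := by
        refine sum_congr rfl fun j _ => ?_
        rw [sum_stfGradSymbol_mul hT]
        split_ifs <;> ring
    _ = _ := by
        simp only [sum_sub_distrib, sum_add_distrib, ← mul_sum, hT.sum_mul_eq_vecMul, sum_ite_eq,
          mem_univ, if_true]
        simp only [dotProduct, v]
        ring

theorem sum_sum_sum_stfGradSymbol_mul (hT : T.IsSymm) (ξ : ι → 𝕜) :
    ∑ i, (∑ j, (∑ k, stfGradSymbol T ξ i j k * ξ k) * ξ j) * ξ i =
      3/5 * (ξ ⬝ᵥ ξ) * ((ξ ᵥ* T) ⬝ᵥ ξ) := by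
  simp only [sum_sum_stfGradSymbol_mul hT, add_mul, sum_add_distrib, mul_assoc, ← mul_sum,
    dotProduct]
  ring

theorem eq_zero_of_stfGradSymbol_eq_zero (hT : T.IsSymm) {ξ : ι → 𝕜} (hξ : ξ ⬝ᵥ ξ ≠ 0)
    (h : ∀ i j k, stfGradSymbol T ξ i j k = 0) : T = 0 := by
  have hq : (ξ ᵥ* T) ⬝ᵥ ξ = 0 := by
    have := sum_sum_sum_stfGradSymbol_mul hT ξ
    simp only [h, zero_mul, sum_const_zero] at this
    simpa [hξ] using this.symm
  have hv (i : ι) : (ξ ᵥ* T) i = 0 := by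
    have := sum_sum_stfGradSymbol_mul hT ξ i
    simp only [h, zero_mul, sum_const_zero, hq] at this
    simpa [hξ] using this.symm
  ext i j
  have := sum_stfGradSymbol_mul hT ξ i j
  simp only [h, zero_mul, sum_const_zero, hq, hv] at this
  simpa [hξ] using this.symm

theorem stmt0_general (T : Matrix (Fin 3) (Fin 3) ℝ) (hsym : T.IsSymm)
    (ξ : Fin 3 → ℝ) (hξ : ξ ≠ 0)
    (h : ∀ i j k : Fin 3,
      (1/3 : ℝ) * (T i j * ξ k + T i k * ξ j + T j k * ξ i)
        - (2/15 : ℝ) * ((∑ l, T l k * ξ l) * (if i = j then (1:ℝ) else 0)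
          + (∑ l, T l j * ξ l) * (if i = k then (1:ℝ) else 0)
          + (∑ l, T l i * ξ l) * (if j = k then (1:ℝ) else 0)) = 0) :
    T = 0 :=
  eq_zero_of_stfGradSymbol_eq_zero hsym (mt dotProduct_self_eq_zero.mp hξ) h

/-- ℝ-ellipticity of the symmetric trace-free gradient on symmetric trace-free
3×3 matrix fields: the vanishing of the symbol forces `T = 0`. -/
theorem stmt0 (T : Matrix (Fin 3) (Fin 3) ℝ) (hsym : T.IsSymm)
    (htr : Matrix.trace T = 0) (ξ : Fin 3 → ℝ) (hξ : ξ ≠ 0)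
    (h : ∀ i j k : Fin 3,
      (1/3 : ℝ) * (T i j * ξ k + T i k * ξ j + T j k * ξ i)
        - (2/15 : ℝ) * ((∑ l, T l k * ξ l) * (if i = j then (1:ℝ) else 0)
          + (∑ l, T l j * ξ l) * (if i = k then (1:ℝ) else 0)
          + (∑ l, T l i * ξ l) * (if j = k then (1:ℝ) else 0)) = 0) :
    T = 0 :=
  stmt0_general T hsym ξ hξ h
end

section
/- Let T be a complex symmetric trace-free 3×3 matrix and ξ ∈ ℂ³ a nonzero vector. If for all indices i,j,k ∈ {1,2,3} one has (1/3)(T_{ij}ξ_k + T_{ik}ξ_j + T_{jk}ξ_i) − (2/15)(Σ_l T_{lk}ξ_l δ_{ij} + Σ_l T_{lj}ξ_l δ_{ik} + Σ_l T_{li}ξ_l δ_{jk}) = 0, then T = 0. (ℂ-ellipticity of the symmetric trace-free gradient on symmetric trace-free matrix fields in dimension 3.) -/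
/-!
Contracting `Sym(T ⊗ ξ) = c Sym(δ ⊗ Tξ)` with `ξ` once and twice gives
`⟨ξ,ξ⟩ T + (1-c)(Tξ ⊗ ξ + ξ ⊗ Tξ) = c ⟨ξ,Tξ⟩ δ` and `(2-c) ⟨ξ,ξ⟩ Tξ = (2c-1) ⟨ξ,Tξ⟩ ξ`,
and a third contraction gives `⟨ξ,ξ⟩ ⟨ξ,Tξ⟩ = 0`. Both for `⟨ξ,ξ⟩ ≠ 0` and for isotropic `ξ`
(which exist over `ℂ`) these force `Tξ = 0`, hence `Sym(T ⊗ ξ) = 0`, and this kills `T` as soon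
as `ξ ≠ 0`.
-/

open Finset Matrix

variable {ι K : Type*} [Field K]

theorem eq_zero_of_forall_mul_add_mul_eq_zero [CharZero K] {v ξ : ι → K} (hξ : ξ ≠ 0)
    (h : ∀ i j, v i * ξ j + v j * ξ i = 0) : v = 0 := by
  obtain ⟨m, hm⟩ : ∃ m, ξ m ≠ 0 := Function.ne_iff.mp hξ
  have hvm : v m = 0 := by
    have : v m * (2 * ξ m) = 0 := by linear_combination h m m
    simpa [hm] using this
  funext i
  have : v i * ξ m = 0 := by linear_combination h i m - ξ i * hvm
  simpa [hm] using this

namespace Matrix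

/-- `3 Sym(T ⊗ ξ)`; the hypothesis of `stmt1` is `symmOuter T ξ = (2/5) • symmOuter 1 (Tξ)`. -/
def symmOuter (T : Matrix ι ι K) (ξ : ι → K) (i j k : ι) : K :=
  T i j * ξ k + T i k * ξ j + T j k * ξ i

theorem eq_zero_of_symmOuter_eq_zero [CharZero K] {T : Matrix ι ι K} {ξ : ι → K} (hξ : ξ ≠ 0)
    (h : symmOuter T ξ = 0) : T = 0 := by
  obtain ⟨m, hm⟩ : ∃ m, ξ m ≠ 0 := Function.ne_iff.mp hξ
  have hT : ∀ i j k, T i j * ξ k + T i k * ξ j + T j k * ξ i = 0 := congr_fun₃ h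
  have hmm : T m m = 0 := by
    have : T m m * (3 * ξ m) = 0 := by linear_combination hT m m m
    simpa [hm] using this
  have hcol : ∀ i, T i m = 0 := fun i => by
    have : T i m * (2 * ξ m) = 0 := by linear_combination hT i m m - ξ i * hmm
    simpa [hm] using this
  ext i j
  have : T i j * ξ m = 0 := by linear_combination hT i j m - ξ j * hcol i - ξ i * hcol j
  simpa [hm] using this

variable [Fintype ι] [DecidableEq ι] {T : Matrix ι ι K} {ξ : ι → K} {c : K}

theorem mul_apply_add_eq_of_symmOuter_eq_smul (h : symmOuter T ξ = c • symmOuter 1 (T *ᵥ ξ))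
    (i j : ι) :
    (ξ ⬝ᵥ ξ) * T i j + (1 - c) * ((T *ᵥ ξ) i * ξ j + (T *ᵥ ξ) j * ξ i)
      = c * (ξ ⬝ᵥ T *ᵥ ξ) * (1 : Matrix ι ι K) i j := by
  have := calc
    (ξ ⬝ᵥ ξ) * T i j + (T *ᵥ ξ) i * ξ j + (T *ᵥ ξ) j * ξ i = ∑ k, symmOuter T ξ i j k * ξ k := by
      simp only [symmOuter, dotProduct, mulVec, sum_mul, ← sum_add_distrib]
      exact sum_congr rfl fun k _ => by ring
    _ = ∑ k, c * symmOuter 1 (T *ᵥ ξ) i j k * ξ k := by rw [h]; rfl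
    _ = c * ((ξ ⬝ᵥ T *ᵥ ξ) * (1 : Matrix ι ι K) i j + (T *ᵥ ξ) j * ξ i + (T *ᵥ ξ) i * ξ j) := by
      simp [symmOuter, one_apply, dotProduct, mul_add, sum_add_distrib, mul_sum, mul_comm,
        mul_left_comm]
  linear_combination this

theorem smul_mulVec_eq_smul_of_symmOuter_eq_smul (h : symmOuter T ξ = c • symmOuter 1 (T *ᵥ ξ)) :
    ((2 - c) * (ξ ⬝ᵥ ξ)) • T *ᵥ ξ = ((2 * c - 1) * (ξ ⬝ᵥ T *ᵥ ξ)) • ξ := by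
  funext i
  have := calc
    (ξ ⬝ᵥ ξ) * (T *ᵥ ξ) i + (1 - c) * ((T *ᵥ ξ) i * (ξ ⬝ᵥ ξ) + (ξ ⬝ᵥ T *ᵥ ξ) * ξ i)
        = ∑ j, ((ξ ⬝ᵥ ξ) * T i j + (1 - c) * ((T *ᵥ ξ) i * ξ j + (T *ᵥ ξ) j * ξ i)) * ξ j := by
      set q := ξ ⬝ᵥ ξ
      set v := T *ᵥ ξ
      change q * (∑ j, T i j * ξ j)
        + (1 - c) * (v i * (∑ j, ξ j * ξ j) + (∑ j, ξ j * v j) * ξ i) = _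
      simp only [mul_sum, sum_mul, ← sum_add_distrib]
      exact sum_congr rfl fun j _ => by ring
    _ = ∑ j, c * (ξ ⬝ᵥ T *ᵥ ξ) * (1 : Matrix ι ι K) i j * ξ j :=
      sum_congr rfl fun j _ => by rw [mul_apply_add_eq_of_symmOuter_eq_smul h]
    _ = c * (ξ ⬝ᵥ T *ᵥ ξ) * ξ i := by simp [one_apply]
  simp only [Pi.smul_apply, smul_eq_mul]
  linear_combination this

theorem eq_zero_of_symmOuter_eq_smul [CharZero K] (hξ : ξ ≠ 0) (hc₁ : c ≠ 1) (hc₂ : c ≠ 2)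
    (hc₃ : 2 * c ≠ 1) (h : symmOuter T ξ = c • symmOuter 1 (T *ᵥ ξ)) : T = 0 := by
  suffices hv : T *ᵥ ξ = 0 by
    refine eq_zero_of_symmOuter_eq_zero hξ (h.trans ?_)
    ext i j k
    simp [symmOuter, hv]
  have hB := smul_mulVec_eq_smul_of_symmOuter_eq_smul h
  rcases eq_or_ne (ξ ⬝ᵥ ξ) 0 with hq | hq
  · have hs : ξ ⬝ᵥ T *ᵥ ξ = 0 := by
      have : ((2 * c - 1) * (ξ ⬝ᵥ T *ᵥ ξ)) • ξ = 0 := by rw [← hB, hq, mul_zero, zero_smul]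
      simpa [hξ, sub_eq_zero, hc₃] using this
    refine eq_zero_of_forall_mul_add_mul_eq_zero hξ fun i j => ?_
    have := mul_apply_add_eq_of_symmOuter_eq_smul h i j
    rw [hq, hs] at this
    simpa [sub_eq_zero, Ne.symm hc₁] using this
  · have hqs : (ξ ⬝ᵥ ξ) * (ξ ⬝ᵥ T *ᵥ ξ) = 0 := by
      have hBξ := congrArg (ξ ⬝ᵥ ·) hB
      simp only [dotProduct_smul, smul_eq_mul] at hBξ
      have : (3 * (1 - c)) * ((ξ ⬝ᵥ ξ) * (ξ ⬝ᵥ T *ᵥ ξ)) = 0 := by linear_combination hBξ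
      simpa [sub_eq_zero, Ne.symm hc₁] using this
    have hs := (mul_eq_zero.mp hqs).resolve_left hq
    rw [hs, mul_zero, zero_smul] at hB
    simpa [hq, sub_eq_zero, Ne.symm hc₂] using hB

end Matrix

theorem stmt1_general (T : Matrix (Fin 3) (Fin 3) ℂ) (hsym : T.IsSymm)
    (ξ : Fin 3 → ℂ) (hξ : ξ ≠ 0)
    (h : ∀ i j k : Fin 3,
      (1/3 : ℂ) * (T i j * ξ k + T i k * ξ j + T j k * ξ i)
        - (2/15 : ℂ) * ((∑ l, T l k * ξ l) * (if i = j then (1:ℂ) else 0)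
          + (∑ l, T l j * ξ l) * (if i = k then (1:ℂ) else 0)
          + (∑ l, T l i * ξ l) * (if j = k then (1:ℂ) else 0)) = 0) :
    T = 0 := by
  have hTξ : ∀ k, ∑ l, T l k * ξ l = (T *ᵥ ξ) k := fun k => by
    simp [mulVec, dotProduct, hsym.apply k]
  refine Matrix.eq_zero_of_symmOuter_eq_smul (c := 2 / 5) hξ (by norm_num) (by norm_num)
    (by norm_num) ?_
  ext i j k
  have hijk := h i j k
  simp only [hTξ] at hijk
  simp only [Matrix.symmOuter, Pi.smul_apply, smul_eq_mul, Matrix.one_apply]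
  linear_combination 3 * hijk

/-- ℂ-ellipticity of the symmetric trace-free gradient on symmetric trace-free
3×3 matrix fields: the vanishing of the complex symbol forces `T = 0`. -/
theorem stmt1 (T : Matrix (Fin 3) (Fin 3) ℂ) (hsym : T.IsSymm)
    (htr : Matrix.trace T = 0) (ξ : Fin 3 → ℂ) (hξ : ξ ≠ 0)
    (h : ∀ i j k : Fin 3,
      (1/3 : ℂ) * (T i j * ξ k + T i k * ξ j + T j k * ξ i)
        - (2/15 : ℂ) * ((∑ l, T l k * ξ l) * (if i = j then (1:ℂ) else 0)
          + (∑ l, T l j * ξ l) * (if i = k then (1:ℂ) else 0)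
          + (∑ l, T l i * ξ l) * (if j = k then (1:ℂ) else 0)) = 0) :
    T = 0 :=
  stmt1_general T hsym ξ hξ h
end

section
/- Let d ≥ 3, T ∈ ℂ^{d×d} symmetric trace-free, and ξ ∈ ℂ^d nonzero. If (1/3)(T_{ij}ξ_k + T_{ik}ξ_j + T_{jk}ξ_i) − (2/(3(d+2)))(Σ_l T_{lk}ξ_l δ_{ij} + Σ_l T_{lj}ξ_l δ_{ik} + Σ_l T_{li}ξ_l δ_{jk}) = 0 for all i,j,k, then T = 0. -/
open Finset

lemma sum3aux {n : ℕ} (c : ℂ) (A B C w : Fin n → ℂ) :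
    ∑ k, c * (A k + B k + C k) * w k
      = c * ((∑ k, A k * w k) + (∑ k, B k * w k) + (∑ k, C k * w k)) := by
  rw [← Finset.sum_add_distrib, ← Finset.sum_add_distrib, Finset.mul_sum]
  exact Finset.sum_congr rfl fun k _ => by ring

/-- ℂ-ellipticity of the symmetric trace-free gradient on symmetric trace-free
tensor fields in dimension `d ≥ 3`. -/
theorem stmt3 (d : ℕ) (hd : 3 ≤ d) (T : Matrix (Fin d) (Fin d) ℂ)
    (hsym : T.IsSymm) (htr : Matrix.trace T = 0)
    (ξ : Fin d → ℂ) (hξ : ξ ≠ 0)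
    (h : ∀ i j k : Fin d,
      (1/3 : ℂ) * (T i j * ξ k + T i k * ξ j + T j k * ξ i)
        - (2/(3*((d:ℂ)+2))) * ((∑ l, T l k * ξ l) * (if i = j then (1:ℂ) else 0)
          + (∑ l, T l j * ξ l) * (if i = k then (1:ℂ) else 0)
          + (∑ l, T l i * ξ l) * (if j = k then (1:ℂ) else 0)) = 0) :
    T = 0 := by
  obtain ⟨k0, hk0⟩ : ∃ k, ξ k ≠ 0 := by
    by_contra hc; push_neg at hc; exact hξ (funext fun k => hc k)
  have hsy : ∀ i j, T j i = T i j := fun i j => hsym.apply i j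
  have hd2 : ((d:ℂ) + 2) ≠ 0 := by
    have h1 : ((d + 2 : ℕ) : ℂ) ≠ 0 := Nat.cast_ne_zero.mpr (by omega)
    push_cast at h1; exact h1
  have hd0 : ((d:ℂ)) ≠ 0 := Nat.cast_ne_zero.mpr (by omega)
  set v : Fin d → ℂ := fun i => ∑ l, T l i * ξ l with hv
  have hrow : ∀ i, ∑ k, T i k * ξ k = v i := by
    intro i
    exact Finset.sum_congr rfl fun k _ => by rw [hsy]
  have hE : ∀ i j k, ((d:ℂ)+2) * (T i j * ξ k + T i k * ξ j + T j k * ξ i)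
      = 2 * ((if i = j then v k else 0) + (if i = k then v j else 0)
        + (if j = k then v i else 0)) := by
    intro i j k
    have H := h i j k
    field_simp at H
    simp only [hv]
    simp only [mul_ite, mul_one, mul_zero] at H
    linear_combination H
  set s : ℂ := ∑ k, ξ k * ξ k with hs
  set p : ℂ := ∑ k, v k * ξ k with hp
  -- first contraction
  have hA : ∀ i j, ((d:ℂ)+2) * (T i j * s + v i * ξ j + v j * ξ i)
      = 2 * ((if i = j then p else 0) + v j * ξ i + v i * ξ j) := by
    intro i j
    have H : ∑ k, ((d:ℂ)+2) * (T i j * ξ k + T i k * ξ j + T j k * ξ i) * ξ k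
        = ∑ k, 2 * ((if i = j then v k else 0) + (if i = k then v j else 0)
          + (if j = k then v i else 0)) * ξ k :=
      Finset.sum_congr rfl fun k _ => by rw [hE i j k]
    have SL := sum3aux ((d:ℂ)+2) (fun k => T i j * ξ k) (fun k => T i k * ξ j)
      (fun k => T j k * ξ i) ξ
    have SR := sum3aux 2 (fun k => if i = j then v k else 0)
      (fun k => if i = k then v j else 0) (fun k => if j = k then v i else 0) ξ
    have a1 : ∑ k, (T i j * ξ k) * ξ k = T i j * s := by
      rw [hs, Finset.mul_sum]; exact Finset.sum_congr rfl fun k _ => by ring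
    have a2 : ∑ k, (T i k * ξ j) * ξ k = v i * ξ j := by
      rw [← hrow i, Finset.sum_mul]; exact Finset.sum_congr rfl fun k _ => by ring
    have a3 : ∑ k, (T j k * ξ i) * ξ k = v j * ξ i := by
      rw [← hrow j, Finset.sum_mul]; exact Finset.sum_congr rfl fun k _ => by ring
    have b1 : ∑ k, (if i = j then v k else 0) * ξ k = (if i = j then p else 0) := by
      rw [hp]; split <;> simp
    have b2 : ∑ k, (if i = k then v j else 0) * ξ k = v j * ξ i := by simp [ite_mul]
    have b3 : ∑ k, (if j = k then v i else 0) * ξ k = v i * ξ j := by simp [ite_mul]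
    linear_combination H - SL + SR - ((d:ℂ)+2)*(a1 + a2 + a3) + 2*(b1 + b2 + b3)
  -- second contraction
  have hB : ∀ i, ((d:ℂ)+2) * (2 * (v i * s) + p * ξ i)
      = 2 * (2 * (p * ξ i) + v i * s) := by
    intro i
    have H : ∑ j, ((d:ℂ)+2) * (T i j * s + v i * ξ j + v j * ξ i) * ξ j
        = ∑ j, 2 * ((if i = j then p else 0) + v j * ξ i + v i * ξ j) * ξ j :=
      Finset.sum_congr rfl fun j _ => by rw [hA i j]
    have SL := sum3aux ((d:ℂ)+2) (fun j => T i j * s) (fun j => v i * ξ j)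
      (fun j => v j * ξ i) ξ
    have SR := sum3aux 2 (fun j => if i = j then p else 0) (fun j => v j * ξ i)
      (fun j => v i * ξ j) ξ
    have c1 : ∑ j, (T i j * s) * ξ j = v i * s := by
      rw [← hrow i, Finset.sum_mul]; exact Finset.sum_congr rfl fun j _ => by ring
    have c2 : ∑ j, (v i * ξ j) * ξ j = v i * s := by
      rw [hs, Finset.mul_sum]; exact Finset.sum_congr rfl fun j _ => by ring
    have c3 : ∑ j, (v j * ξ i) * ξ j = p * ξ i := by
      rw [hp, Finset.sum_mul]; exact Finset.sum_congr rfl fun j _ => by ring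
    have d1 : ∑ j, (if i = j then p else 0) * ξ j = p * ξ i := by simp [ite_mul]
    linear_combination H - SL + SR - ((d:ℂ)+2)*(c1 + c2 + c3) + 2*(d1 + c3 + c2)
  -- third contraction : p * s = 0
  have hps : p * s = 0 := by
    have H : ∑ i, ((d:ℂ)+2) * (2 * (v i * s) + p * ξ i) * ξ i
        = ∑ i, 2 * (2 * (p * ξ i) + v i * s) * ξ i :=
      Finset.sum_congr rfl fun i _ => by rw [hB i]
    have e1 : ∀ i' : Fin d, ((d:ℂ)+2) * (2 * (v i' * s) + p * ξ i') * ξ i'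
        = ((d:ℂ)+2) * 2 * s * (v i' * ξ i') + ((d:ℂ)+2) * p * (ξ i' * ξ i') := fun i' => by ring
    have e2 : ∀ i' : Fin d, 2 * (2 * (p * ξ i') + v i' * s) * ξ i'
        = 4 * p * (ξ i' * ξ i') + 2 * s * (v i' * ξ i') := fun i' => by ring
    rw [Finset.sum_congr rfl fun i' _ => e1 i', Finset.sum_congr rfl fun i' _ => e2 i',
      Finset.sum_add_distrib, Finset.sum_add_distrib, ← Finset.mul_sum, ← Finset.mul_sum,
      ← Finset.mul_sum, ← Finset.mul_sum, ← hp, ← hs] at H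
    have h3d : (3 * (d:ℂ)) * (p * s) = 0 := by linear_combination H
    have : (3 * (d:ℂ)) ≠ 0 := mul_ne_zero (by norm_num) hd0
    exact (mul_eq_zero.mp h3d).resolve_left this
  -- v = 0
  have hv0 : ∀ i, v i = 0 := by
    by_cases hs0 : s = 0
    · -- isotropic case
      have hp0 : p = 0 := by
        have H := hB k0
        rw [hs0] at H
        have : ((d:ℂ) - 2) * (p * ξ k0) = 0 := by linear_combination H
        have hdne : ((d:ℂ) - 2) ≠ 0 := by
          have : ((d:ℂ)) ≠ 2 := by
            intro hc
            have : (d : ℂ) = ((2:ℕ) : ℂ) := by push_cast; exact hc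
            have := Nat.cast_injective this
            omega
          exact sub_ne_zero.mpr this
        have := (mul_eq_zero.mp this).resolve_left hdne
        exact (mul_eq_zero.mp this).resolve_right hk0
      have key : ∀ i j, v i * ξ j + v j * ξ i = 0 := by
        intro i j
        have H := hA i j
        rw [hs0, hp0] at H
        simp only [ite_self] at H
        have H' : (d:ℂ) * (v i * ξ j + v j * ξ i) = 0 := by linear_combination H
        exact (mul_eq_zero.mp H').resolve_left hd0
      have hvk0 : v k0 = 0 := by
        have H := key k0 k0
        have : v k0 * (2 * ξ k0) = 0 := by linear_combination H
        exact (mul_eq_zero.mp this).resolve_right (mul_ne_zero (by norm_num) hk0)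
      intro i
      have H := key k0 i
      have : v i * ξ k0 = 0 := by linear_combination H - ξ i * hvk0
      exact (mul_eq_zero.mp this).resolve_right hk0
    · -- non-isotropic case
      have hp0 : p = 0 := (mul_eq_zero.mp hps).resolve_right hs0
      intro i
      have H := hB i
      rw [hp0] at H
      have : (2 * (d:ℂ) + 2) * (v i * s) = 0 := by linear_combination H
      have hne : (2 * (d:ℂ) + 2) ≠ 0 := by
        have h1 : ((2 * d + 2 : ℕ) : ℂ) ≠ 0 := Nat.cast_ne_zero.mpr (by omega)
        push_cast at h1; exact h1
      have := (mul_eq_zero.mp this).resolve_left hne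
      exact (mul_eq_zero.mp this).resolve_right hs0
  -- now T i j * ξ k + T i k * ξ j + T j k * ξ i = 0
  have hE0 : ∀ i j k, T i j * ξ k + T i k * ξ j + T j k * ξ i = 0 := by
    intro i j k
    have H := hE i j k
    simp only [hv0, ite_self, add_zero, mul_zero] at H
    exact (mul_eq_zero.mp H).resolve_left hd2
  have hkk : T k0 k0 = 0 := by
    have H := hE0 k0 k0 k0
    have : T k0 k0 * (3 * ξ k0) = 0 := by linear_combination H
    exact (mul_eq_zero.mp this).resolve_right (mul_ne_zero (by norm_num) hk0)
  have hcol : ∀ i, T i k0 = 0 := by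
    intro i
    have H := hE0 i k0 k0
    have : T i k0 * (2 * ξ k0) = 0 := by linear_combination H - ξ i * hkk
    exact (mul_eq_zero.mp this).resolve_right (mul_ne_zero (by norm_num) hk0)
  ext i j
  have H := hE0 i j k0
  have : T i j * ξ k0 = 0 := by linear_combination H - ξ j * hcol i - ξ i * hcol j
  simpa using (mul_eq_zero.mp this).resolve_right hk0
end

section
/- Let T ∈ ℂ^{3×3} be symmetric trace-free and ξ ∈ ℂ³ with ⟨ξ,ξ⟩ := Σ_j ξ_j² ≠ 0. If the matrix equation (1/3)⟨ξ,ξ⟩ T + (1/5)((Tξ) ⊗ ξ + ξ ⊗ (Tξ)) − (2/15)⟨Tξ,ξ⟩ 1₃ = 0 holds, then T = 0. -/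
/-!
Applying the symbol to `ξ` gives `(8/15) ⟨ξ,ξ⟩ Tξ + (1/15) ⟨Tξ,ξ⟩ ξ`, and pairing that with `ξ`
gives `(3/5) ⟨ξ,ξ⟩ ⟨Tξ,ξ⟩`. As `⟨ξ,ξ⟩ ≠ 0`, first `⟨Tξ,ξ⟩ = 0`, then `Tξ = 0`, after which the
symbol is just `(1/3) ⟨ξ,ξ⟩ T`.
-/

open Matrix

section StfSymbol

variable {ι K : Type*} [Fintype ι] [DecidableEq ι] [Field K] [CharZero K]

def stfSymbol (T : Matrix ι ι K) (ξ : ι → K) : Matrix ι ι K :=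
  (1 / 3 * (ξ ⬝ᵥ ξ)) • T + (1 / 5 : K) • (vecMulVec (T *ᵥ ξ) ξ + vecMulVec ξ (T *ᵥ ξ))
    - (2 / 15 * ((T *ᵥ ξ) ⬝ᵥ ξ)) • 1

theorem stfSymbol_mulVec_self (T : Matrix ι ι K) (ξ : ι → K) :
    stfSymbol T ξ *ᵥ ξ = (8 / 15 * (ξ ⬝ᵥ ξ)) • (T *ᵥ ξ) + (1 / 15 * ((T *ᵥ ξ) ⬝ᵥ ξ)) • ξ := by
  ext i
  simp only [stfSymbol, sub_mulVec, add_mulVec, smul_mulVec, one_mulVec, vecMulVec_mulVec,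
    Pi.add_apply, Pi.sub_apply, Pi.smul_apply, smul_eq_mul, MulOpposite.smul_eq_mul_unop,
    MulOpposite.unop_op]
  ring

theorem stfSymbol_mulVec_self_dotProduct_self (T : Matrix ι ι K) (ξ : ι → K) :
    (stfSymbol T ξ *ᵥ ξ) ⬝ᵥ ξ = 3 / 5 * (ξ ⬝ᵥ ξ) * ((T *ᵥ ξ) ⬝ᵥ ξ) := by
  rw [stfSymbol_mulVec_self, add_dotProduct, smul_dotProduct, smul_dotProduct, smul_eq_mul,
    smul_eq_mul]
  ring

variable {T : Matrix ι ι K} {ξ : ι → K}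

theorem mulVec_eq_zero_of_stfSymbol_eq_zero (hξ : ξ ⬝ᵥ ξ ≠ 0) (h : stfSymbol T ξ = 0) :
    T *ᵥ ξ = 0 := by
  have hTξξ : (T *ᵥ ξ) ⬝ᵥ ξ = 0 := by
    have hpair := stfSymbol_mulVec_self_dotProduct_self T ξ
    rw [h, zero_mulVec, zero_dotProduct] at hpair
    simpa [hξ] using hpair.symm
  have happly := stfSymbol_mulVec_self T ξ
  rw [h, zero_mulVec, hTξξ] at happly
  simpa [hξ] using happly.symm

theorem eq_zero_of_stfSymbol_eq_zero (hξ : ξ ⬝ᵥ ξ ≠ 0) (h : stfSymbol T ξ = 0) : T = 0 := by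
  have hsymbol : stfSymbol T ξ = (1 / 3 * (ξ ⬝ᵥ ξ)) • T := by
    simp [stfSymbol, mulVec_eq_zero_of_stfSymbol_eq_zero hξ h]
  rw [hsymbol] at h
  simpa [hξ] using h

end StfSymbol

theorem stmt6_general (T : Matrix (Fin 3) (Fin 3) ℂ)
    (ξ : Fin 3 → ℂ) (hξ : (∑ j, ξ j * ξ j) ≠ 0)
    (h : ∀ i j : Fin 3,
      (1/3 : ℂ) * (∑ l, ξ l * ξ l) * T i j
        + (1/5 : ℂ) * (T.mulVec ξ i * ξ j + ξ i * T.mulVec ξ j)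
        - (2/15 : ℂ) * (∑ l, T.mulVec ξ l * ξ l) * (if i = j then (1:ℂ) else 0)
        = 0) :
    T = 0 := by
  refine eq_zero_of_stfSymbol_eq_zero hξ ?_
  ext i j
  rw [Matrix.zero_apply, ← h i j]
  simp only [stfSymbol, Matrix.sub_apply, Matrix.add_apply, Matrix.smul_apply, vecMulVec_apply,
    one_apply, smul_eq_mul, dotProduct]

/-- First case of the ℂ-ellipticity proof: if `⟨ξ,ξ⟩ ≠ 0` and the contracted
symbol equation holds, then `T = 0`. -/
theorem stmt6 (T : Matrix (Fin 3) (Fin 3) ℂ) (hsym : T.IsSymm)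
    (htr : Matrix.trace T = 0) (ξ : Fin 3 → ℂ) (hξ : (∑ j, ξ j * ξ j) ≠ 0)
    (h : ∀ i j : Fin 3,
      (1/3 : ℂ) * (∑ l, ξ l * ξ l) * T i j
        + (1/5 : ℂ) * (T.mulVec ξ i * ξ j + ξ i * T.mulVec ξ j)
        - (2/15 : ℂ) * (∑ l, T.mulVec ξ l * ξ l) * (if i = j then (1:ℂ) else 0)
        = 0) :
    T = 0 :=
  stmt6_general T ξ hξ h
end

section
/- Let T ∈ ℂ^{3×3} be symmetric trace-free and ξ ∈ ℂ³ with ξ ≠ 0 and ⟨ξ,ξ⟩ := Σ_j ξ_j² = 0. If (1/5)((Tξ) ⊗ ξ + ξ ⊗ (Tξ)) − (2/15)⟨Tξ,ξ⟩ 1₃ = 0, then Tξ = 0. -/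
/-!
Write `v = Tξ`. The hypothesis says that `v ⊗ ξ + ξ ⊗ v` is the scalar matrix `(2/3)⟨v,ξ⟩ 1`.
Applied to the isotropic vector `ξ`, the left side gives `⟨ξ,ξ⟩ v + ⟨v,ξ⟩ ξ = ⟨v,ξ⟩ ξ`, so the
scalar is also `⟨v,ξ⟩`; hence `⟨v,ξ⟩ = 0` and `v ⊗ ξ + ξ ⊗ v = 0`. Reading this off at a
coordinate `k` with `ξ k ≠ 0` gives first `v k = 0` and then `v = 0`.
-/

open Matrix

variable {ι R : Type*} [CommRing R] [NoZeroDivisors R]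

theorem eq_zero_of_vecMulVec_add_vecMulVec_eq_zero [NeZero (2 : R)] {v ξ : ι → R}
    (hξ : ξ ≠ 0) (h : vecMulVec v ξ + vecMulVec ξ v = 0) : v = 0 := by
  obtain ⟨k, hk⟩ : ∃ k, ξ k ≠ 0 := Function.ne_iff.mp hξ
  have hentry (i j : ι) : v i * ξ j + ξ i * v j = 0 := by
    simpa [vecMulVec_apply] using congrFun₂ h i j
  have hvk : v k = 0 := by
    have : 2 * v k * ξ k = 0 := by linear_combination hentry k k
    simpa [hk, NeZero.ne] using this
  ext i
  have : v i * ξ k = 0 := by simpa [hvk] using hentry i k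
  simpa [hk] using this

theorem eq_dotProduct_of_vecMulVec_add_vecMulVec_eq_smul_one [Fintype ι] [DecidableEq ι]
    {v ξ : ι → R} {d : R} (hiso : ξ ⬝ᵥ ξ = 0) (hξ : ξ ≠ 0)
    (h : vecMulVec v ξ + vecMulVec ξ v = d • 1) : d = v ⬝ᵥ ξ := by
  have happly := congrArg (· *ᵥ ξ) h
  simp only [add_mulVec, vecMulVec_mulVec, smul_mulVec, one_mulVec, hiso, op_smul_eq_smul,
    zero_smul, zero_add] at happly
  have : (d - v ⬝ᵥ ξ) • ξ = 0 := by rw [sub_smul, happly, sub_self]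
  exact sub_eq_zero.mp ((smul_eq_zero.mp this).resolve_right hξ)

theorem stmt7_general (T : Matrix (Fin 3) (Fin 3) ℂ)
    (ξ : Fin 3 → ℂ) (hξ : ξ ≠ 0)
    (hiso : (∑ j, ξ j * ξ j) = 0)
    (h : ∀ i j : Fin 3,
      (1/5 : ℂ) * (T.mulVec ξ i * ξ j + ξ i * T.mulVec ξ j)
        - (2/15 : ℂ) * (∑ l, T.mulVec ξ l * ξ l) * (if i = j then (1:ℂ) else 0)
        = 0) :
    T.mulVec ξ = 0 := by
  set v := T *ᵥ ξ
  have hscalar : vecMulVec v ξ + vecMulVec ξ v = ((2 / 3 : ℂ) * (v ⬝ᵥ ξ)) • 1 := by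
    ext i j
    rw [Matrix.add_apply, vecMulVec_apply, vecMulVec_apply, Matrix.smul_apply, one_apply,
      smul_eq_mul, dotProduct]
    linear_combination 5 * h i j
  have hvξ : v ⬝ᵥ ξ = 0 := by
    have := eq_dotProduct_of_vecMulVec_add_vecMulVec_eq_smul_one hiso hξ hscalar
    linear_combination -3 * this
  refine eq_zero_of_vecMulVec_add_vecMulVec_eq_zero hξ ?_
  simpa [hvξ] using hscalar

/-- Second case of the ℂ-ellipticity proof: if `ξ ≠ 0` is isotropic
(`⟨ξ,ξ⟩ = 0`) and the contracted symbol equation holds, then `Tξ = 0`. -/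
theorem stmt7 (T : Matrix (Fin 3) (Fin 3) ℂ) (hsym : T.IsSymm)
    (htr : Matrix.trace T = 0) (ξ : Fin 3 → ℂ) (hξ : ξ ≠ 0)
    (hiso : (∑ j, ξ j * ξ j) = 0)
    (h : ∀ i j : Fin 3,
      (1/5 : ℂ) * (T.mulVec ξ i * ξ j + ξ i * T.mulVec ξ j)
        - (2/15 : ℂ) * (∑ l, T.mulVec ξ l * ξ l) * (if i = j then (1:ℂ) else 0)
        = 0) :
    T.mulVec ξ = 0 :=
  stmt7_general T ξ hξ hiso h
end

section
/- Abstract saddle-point well-posedness with trivial kernel of the transpose: Let V, Q be real Hilbert spaces, a : V×V → ℝ and b : V×Q → ℝ bounded bilinear forms. Assume (i) there is k₀ > 0 with sup_{v ∈ V, v≠0} b(v,q)/‖v‖ ≥ k₀ ‖q‖ for all q ∈ Q, and (ii) there is α₀ > 0 such that a(u,u) ≥ α₀ ‖u‖² for all u in the kernel K = {v ∈ V : b(v,q) = 0 ∀q ∈ Q}. Then for every f ∈ V' and g ∈ Q' there exists a unique pair (u,p) ∈ V×Q with a(u,v) + b(v,p) = f(v) for all v ∈ V and b(u,q) = g(q)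 for all q ∈ Q; moreover ‖u‖ ≤ (1/α₀)‖f‖ + (‖a‖/α₀ + 1)(1/k₀)‖g‖. -/
open InnerProductSpace ContinuousLinearMap RealInnerProductSpace


private lemma stmt18.auxL1 {k x : ℝ} (hk : 0 < k) (hx : 0 ≤ x) (h : k * x ≤ 0) : x = 0 := by
  nlinarith

private lemma stmt18.auxL2 {C x y : ℝ} (hx : 0 < x) (hy : 0 ≤ y) (h : y ≤ C * x * x) : 0 ≤ C := by
  nlinarith [mul_pos hx hx]

private lemma stmt18.auxL4 {k u g q : ℝ} (hk : 0 < k) (hu : 0 ≤ u) (hg : 0 ≤ g) (hq : 0 ≤ q)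
    (h1 : u * u ≤ g * q) (h3 : k * q ≤ u) : k * u ≤ g := by
  rcases eq_or_lt_of_le hu with h0 | h0
  · rw [← h0, mul_zero]; exact hg
  · nlinarith

private lemma stmt18.auxL5 {α w A : ℝ} (hα : 0 < α) (hw : 0 ≤ w) (hA : 0 ≤ A)
    (h : α * w ^ 2 ≤ A * w) : α * w ≤ A := by
  rcases eq_or_lt_of_le hw with h0 | h0
  · rw [← h0, mul_zero]; exact hA
  · nlinarith

private lemma stmt18.auxL6 {α x : ℝ} (hα : 0 < α) (hx : 0 ≤ x) (h : α * x ^ 2 ≤ 0) : x = 0 := by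
  rcases eq_or_lt_of_le hx with h0 | h0
  · exact h0.symm
  · nlinarith [mul_pos hα (mul_pos h0 h0)]

set_option maxHeartbeats 1000000 in
/-- Abstract saddle-point well-posedness (Brezzi) with trivial kernel of the
transpose: under the inf–sup condition for `b` and coercivity of `a` on the
kernel of `b`, for all data `(f, g)` there is a unique solution `(u, p)`, and
`u` satisfies the a priori bound with any continuity constant `Ca` of `a`. -/
theorem stmt18 {V Q : Type*}
    [NormedAddCommGroup V] [InnerProductSpace ℝ V] [CompleteSpace V]
    [NormedAddCommGroup Q] [InnerProductSpace ℝ Q] [CompleteSpace Q]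
    (a : V →ₗ[ℝ] V →ₗ[ℝ] ℝ) (b : V →ₗ[ℝ] Q →ₗ[ℝ] ℝ) (Ca Cb : ℝ)
    (ha : ∀ u v : V, |a u v| ≤ Ca * ‖u‖ * ‖v‖)
    (hb : ∀ (v : V) (q : Q), |b v q| ≤ Cb * ‖v‖ * ‖q‖)
    (k₀ : ℝ) (hk₀ : 0 < k₀)
    (hinfsup : ∀ q : Q, k₀ * ‖q‖ ≤ ⨆ v : V, b v q / ‖v‖)
    (α₀ : ℝ) (hα₀ : 0 < α₀)
    (hcoer : ∀ u : V, (∀ q : Q, b u q = 0) → α₀ * ‖u‖ ^ 2 ≤ a u u) :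
    ∀ (f : V →L[ℝ] ℝ) (g : Q →L[ℝ] ℝ),
      ∃ up : V × Q,
        ((∀ v : V, a up.1 v + b v up.2 = f v) ∧ (∀ q : Q, b up.1 q = g q)
          ∧ ‖up.1‖ ≤ (1 / α₀) * ‖f‖ + (Ca / α₀ + 1) * (1 / k₀) * ‖g‖)
        ∧ ∀ up' : V × Q,
            ((∀ v : V, a up'.1 v + b v up'.2 = f v)
              ∧ (∀ q : Q, b up'.1 q = g q)) → up' = up := by
  intro f g
  classical
  by_cases hV : ∀ u : V, u = 0
  · -- degenerate case: `V = 0`, hence by inf-sup `Q = 0` too.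
    have hQ : ∀ q : Q, q = 0 := by
      intro q
      have h0 : (fun v : V => b v q / ‖v‖) = fun _ => (0 : ℝ) := by
        funext v; rw [hV v]; simp
      have h := hinfsup q
      rw [h0, ciSup_const] at h
      have hq : ‖q‖ = 0 := stmt18.auxL1 hk₀ (norm_nonneg q) h
      simpa [norm_eq_zero] using hq
    have hf : f = 0 := by ext v; rw [hV v]; simp
    have hg : g = 0 := by ext q; rw [hQ q]; simp
    refine ⟨(0, 0), ⟨?_, ?_, ?_⟩, ?_⟩
    · intro v; rw [hV v]; simp
    · intro q; rw [hQ q]; simp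
    · simp [hf, hg]
    · rintro ⟨u', p'⟩ _
      have h1 : u' = 0 := hV u'
      have h2 : p' = 0 := hQ p'
      simp [h1, h2]
  · push_neg at hV
    obtain ⟨v₀, hv₀⟩ := hV
    have hv₀' : 0 < ‖v₀‖ := norm_pos_iff.mpr hv₀
    have hCa : 0 ≤ Ca := stmt18.auxL2 hv₀' (abs_nonneg (a v₀ v₀)) (ha v₀ v₀)
    -- continuous versions of the bilinear forms
    set Ac : V →L[ℝ] V →L[ℝ] ℝ :=
      LinearMap.mkContinuous₂ a Ca (fun u v => by
        simpa [Real.norm_eq_abs] using ha u v) with hAcdef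
    set Bc : V →L[ℝ] Q →L[ℝ] ℝ :=
      LinearMap.mkContinuous₂ b Cb (fun u v => by
        simpa [Real.norm_eq_abs] using hb u v) with hBcdef
    have hAc : ∀ u v, Ac u v = a u v := fun _ _ => rfl
    have hBc : ∀ v q, Bc v q = b v q := fun _ _ => rfl
    -- the operator `B : V → Q` with `⟪B v, q⟫ = b v q`
    set Bop : V →L[ℝ] Q :=
      ((InnerProductSpace.toDual ℝ Q).symm.toContinuousLinearEquiv :
          (Q →L[ℝ] ℝ) ≃L[ℝ] Q).toContinuousLinearMap.comp Bc with hBopdef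
    have hBop : ∀ (v : V) (q : Q), ⟪Bop v, q⟫_ℝ = b v q := by
      intro v q
      show ⟪(InnerProductSpace.toDual ℝ Q).symm (Bc v), q⟫_ℝ = b v q
      rw [InnerProductSpace.toDual_symm_apply, hBc]
    -- its adjoint `Bt : Q → V` with `⟪Bt q, v⟫ = b v q`
    set Bt : Q →L[ℝ] V := ContinuousLinearMap.adjoint Bop with hBtdef
    have hBt : ∀ (q : Q) (v : V), ⟪Bt q, v⟫_ℝ = b v q := by
      intro q v
      rw [hBtdef, ContinuousLinearMap.adjoint_inner_left, real_inner_comm, hBop]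
    -- `Bt` is bounded below with constant `k₀`
    have hlow : ∀ q : Q, k₀ * ‖q‖ ≤ ‖Bt q‖ := by
      intro q
      refine (hinfsup q).trans (ciSup_le fun v => ?_)
      rcases eq_or_ne v 0 with rfl | hv
      · simp
      · rw [div_le_iff₀ (norm_pos_iff.mpr hv)]
        calc b v q = ⟪Bt q, v⟫_ℝ := (hBt q v).symm
          _ ≤ ‖Bt q‖ * ‖v‖ := real_inner_le_norm _ _
    have hBtinj : ∀ q : Q, Bt q = 0 → q = 0 := by
      intro q hq
      have h1 := hlow q
      rw [hq, norm_zero] at h1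
      have h2 : ‖q‖ = 0 := stmt18.auxL1 hk₀ (norm_nonneg q) h1
      simpa [norm_eq_zero] using h2
    -- the coercive bilinear form `(q, q') ↦ b (Bt q) q' = ⟪Bt q, Bt q'⟫`
    set Sbil : Q →L[ℝ] Q →L[ℝ] ℝ := Bc.comp Bt with hSdef
    have hSapp : ∀ q q' : Q, Sbil q q' = b (Bt q) q' := fun _ _ => rfl
    have hScoer : IsCoercive Sbil := by
      refine ⟨k₀ ^ 2, by positivity, fun q => ?_⟩
      have h1 : Sbil q q = ⟪Bt q, Bt q⟫_ℝ := by rw [hSapp, ← hBt]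
      have h2 := hlow q
      rw [h1, real_inner_self_eq_norm_mul_norm]
      calc k₀ ^ 2 * ‖q‖ * ‖q‖ = (k₀ * ‖q‖) * (k₀ * ‖q‖) := by ring
        _ ≤ ‖Bt q‖ * ‖Bt q‖ :=
            mul_le_mul h2 h2 (by positivity) (norm_nonneg (Bt q))
    -- solve `b (Bt q₀) q' = g q'` via Lax–Milgram, set `ug := Bt q₀`
    set eS := hScoer.continuousLinearEquivOfBilin with heSdef
    set q₀ : Q := eS.symm ((InnerProductSpace.toDual ℝ Q).symm g) with hq₀def
    have hq₀ : ∀ q' : Q, b (Bt q₀) q' = g q' := by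
      intro q'
      have h1 := hScoer.continuousLinearEquivOfBilin_apply q₀ q'
      rw [hq₀def] at h1
      rw [← hSapp, ← h1, ← heSdef]
      rw [eS.apply_symm_apply, InnerProductSpace.toDual_symm_apply]
    set ug : V := Bt q₀ with hugdef
    have hug : k₀ * ‖ug‖ ≤ ‖g‖ := by
      have h1 : ‖ug‖ * ‖ug‖ = b ug q₀ := by
        rw [← hBt q₀ ug, hugdef, real_inner_self_eq_norm_mul_norm]
      have h2 : b ug q₀ ≤ ‖g‖ * ‖q₀‖ := by
        rw [hq₀ q₀]
        calc g q₀ ≤ ‖g q₀‖ := le_abs_self _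
          _ ≤ ‖g‖ * ‖q₀‖ := g.le_opNorm q₀
      have h3 : k₀ * ‖q₀‖ ≤ ‖ug‖ := hlow q₀
      exact stmt18.auxL4 hk₀ (norm_nonneg ug) (norm_nonneg g) (norm_nonneg q₀)
        ((le_of_eq h1).trans h2) h3
    -- the kernel `K` of `Bop`
    set K : Submodule ℝ V := LinearMap.ker (Bop : V →ₗ[ℝ] Q) with hKdef
    have hKmem : ∀ v : V, v ∈ K ↔ ∀ q : Q, b v q = 0 := by
      intro v
      constructor
      · intro hv q
        rw [← hBop]
        have : Bop v = 0 := hv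
        rw [this, inner_zero_left]
      · intro hv
        have : ⟪Bop v, Bop v⟫_ℝ = 0 := by rw [hBop]; exact hv _
        exact inner_self_eq_zero.mp this
    have hKclosed : IsClosed (K : Set V) := ContinuousLinearMap.isClosed_ker Bop
    haveI : CompleteSpace K := hKclosed.completeSpace_coe
    -- the restricted form `aK` on `K` is coercive
    set aK : K →L[ℝ] K →L[ℝ] ℝ := Ac.bilinearComp K.subtypeL K.subtypeL with haKdef
    have haK : ∀ x y : K, aK x y = a (x : V) (y : V) := fun _ _ => rfl
    have haKcoer : IsCoercive aK := by
      refine ⟨α₀, hα₀, fun x => ?_⟩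
      have h1 : α₀ * ‖(x : V)‖ ^ 2 ≤ a (x : V) (x : V) :=
        hcoer _ ((hKmem _).mp x.2)
      have h2 : ‖x‖ = ‖(x : V)‖ := rfl
      rw [haK, h2]
      calc α₀ * ‖(x : V)‖ * ‖(x : V)‖ = α₀ * ‖(x : V)‖ ^ 2 := by ring
        _ ≤ a (x : V) (x : V) := h1
    -- solve on the kernel
    set F : K →L[ℝ] ℝ := (f - Ac ug).comp K.subtypeL with hFdef
    have hFapp : ∀ x : K, F x = f (x : V) - a ug (x : V) := fun _ => rfl
    set eA := haKcoer.continuousLinearEquivOfBilin with heAdef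
    set w : K := eA.symm ((InnerProductSpace.toDual ℝ K).symm F) with hwdef
    have hw : ∀ x : K, a (w : V) (x : V) = f (x : V) - a ug (x : V) := by
      intro x
      have h1 := haKcoer.continuousLinearEquivOfBilin_apply w x
      rw [hwdef] at h1
      rw [← haK, ← h1, ← heAdef, eA.apply_symm_apply,
        InnerProductSpace.toDual_symm_apply, hFapp]
    set u : V := ug + (w : V) with hudef
    -- the functional `L = f - a(u, ·)` vanishes on `K`
    set L : V →L[ℝ] ℝ := f - Ac u with hLdef
    have hLapp : ∀ v : V, L v = f v - a u v := fun _ => rfl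
    have hL0 : ∀ x : V, x ∈ K → L x = 0 := by
      intro x hx
      have h1 := hw ⟨x, hx⟩
      rw [hLapp, hudef, map_add, LinearMap.add_apply]
      simp only [Submodule.coe_mk] at h1
      linarith
    -- `Kᗮ` equals the range of `Bt`
    set R : Submodule ℝ V := LinearMap.range (Bt : Q →ₗ[ℝ] V) with hRdef
    have hRclosed : IsClosed (R : Set V) := by
      have hanti : AntilipschitzWith (k₀⁻¹).toNNReal Bt := by
        refine AddMonoidHomClass.antilipschitz_of_bound Bt fun q => ?_
        have h1 := hlow q
        have h2 : ((k₀⁻¹).toNNReal : ℝ) = k₀⁻¹ :=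
          Real.coe_toNNReal _ (by positivity)
        rw [h2, ← inv_mul_le_iff₀ (by positivity : (0:ℝ) < k₀⁻¹)]
        simpa [inv_inv] using h1
      exact hanti.isClosed_range Bt.uniformContinuous
    have hRperp : Rᗮ = K := by
      ext v
      rw [Submodule.mem_orthogonal, hKmem]
      constructor
      · intro h q
        rw [← hBt]
        exact h (Bt q) ⟨q, rfl⟩
      · rintro h x ⟨q, rfl⟩
        rw [ContinuousLinearMap.coe_coe, hBt]
        exact h q
    have hKorth : Kᗮ = R := by
      rw [← hRperp, Submodule.orthogonal_orthogonal_eq_closure,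
        hRclosed.submodule_topologicalClosure_eq]
    -- obtain the pressure `p`
    set l : V := (InnerProductSpace.toDual ℝ V).symm L with hldef
    have hlK : l ∈ Kᗮ := by
      rw [Submodule.mem_orthogonal]
      intro x hx
      rw [real_inner_comm, hldef, InnerProductSpace.toDual_symm_apply]
      exact hL0 x hx
    rw [hKorth] at hlK
    obtain ⟨p, hp⟩ := hlK
    have hbp : ∀ v : V, b v p = f v - a u v := by
      intro v
      rw [← hBt, show Bt p = l from hp, hldef, InnerProductSpace.toDual_symm_apply, hLapp]
    -- the a priori bound
    have hwnorm : α₀ * ‖(w : V)‖ ≤ ‖f‖ + Ca * ‖ug‖ := by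
      have h1 : α₀ * ‖(w : V)‖ ^ 2 ≤ a (w : V) (w : V) :=
        hcoer _ ((hKmem _).mp w.2)
      have h2 := hw w
      have h3 : f (w : V) ≤ ‖f‖ * ‖(w : V)‖ := by
        calc f (w : V) ≤ ‖f (w : V)‖ := le_abs_self _
          _ ≤ ‖f‖ * ‖(w : V)‖ := f.le_opNorm _
      have h4 : -(a ug (w : V)) ≤ Ca * ‖ug‖ * ‖(w : V)‖ := by
        have := ha ug (w : V)
        have := neg_abs_le (a ug (w : V))
        linarith
      have h5 : α₀ * ‖(w : V)‖ ^ 2 ≤ (‖f‖ + Ca * ‖ug‖) * ‖(w : V)‖ := by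
        have hexp : (‖f‖ + Ca * ‖ug‖) * ‖(w : V)‖
            = ‖f‖ * ‖(w : V)‖ + Ca * ‖ug‖ * ‖(w : V)‖ := by ring
        linarith
      exact stmt18.auxL5 hα₀ (norm_nonneg _)
        (add_nonneg (norm_nonneg f) (mul_nonneg hCa (norm_nonneg ug))) h5
    have hubound : ‖u‖ ≤ (1 / α₀) * ‖f‖ + (Ca / α₀ + 1) * (1 / k₀) * ‖g‖ := by
      have h0 : ‖u‖ ≤ ‖ug‖ + ‖(w : V)‖ := norm_add_le _ _
      have h1 : ‖ug‖ ≤ (1 / k₀) * ‖g‖ := by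
        rw [div_mul_eq_mul_div, le_div_iff₀ hk₀]
        linarith [hug]
      have h2 : ‖(w : V)‖ ≤ (1 / α₀) * (‖f‖ + Ca * ‖ug‖) := by
        rw [div_mul_eq_mul_div, le_div_iff₀ hα₀]
        linarith [hwnorm]
      have h3 : (0:ℝ) ≤ Ca / α₀ := by positivity
      calc ‖u‖ ≤ ‖ug‖ + ‖(w : V)‖ := h0
        _ ≤ ‖ug‖ + (1 / α₀) * (‖f‖ + Ca * ‖ug‖) := by linarith
        _ = (1 / α₀) * ‖f‖ + (Ca / α₀ + 1) * ‖ug‖ := by field_simp; ring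
        _ ≤ (1 / α₀) * ‖f‖ + (Ca / α₀ + 1) * ((1 / k₀) * ‖g‖) := by
            have := mul_le_mul_of_nonneg_left h1 (by linarith : (0:ℝ) ≤ Ca / α₀ + 1)
            linarith
        _ = (1 / α₀) * ‖f‖ + (Ca / α₀ + 1) * (1 / k₀) * ‖g‖ := by ring
    refine ⟨(u, p), ⟨?_, ?_, hubound⟩, ?_⟩
    · intro v
      have := hbp v
      simp only
      linarith
    · intro q
      simp only
      rw [hudef, map_add, LinearMap.add_apply]
      have h1 : b (w : V) q = 0 := (hKmem _).mp w.2 q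
      rw [h1, hq₀ q, add_zero]
    · rintro ⟨u', p'⟩ ⟨heq1, heq2⟩
      simp only at heq1 heq2
      have hbu : ∀ v : V, a u v + b v p = f v := by
        intro v; have := hbp v; linarith
      have hbuq : ∀ q : Q, b u q = g q := by
        intro q
        rw [hudef, map_add, LinearMap.add_apply,
          (hKmem _).mp w.2 q, hq₀ q, add_zero]
      -- difference
      have hδK : ∀ q : Q, b (u' - u) q = 0 := by
        intro q
        rw [map_sub, LinearMap.sub_apply, heq2, hbuq, sub_self]
      have hδeq : ∀ v : V, a (u' - u) v + b v (p' - p) = 0 := by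
        intro v
        have h1 := heq1 v
        have h2 := hbu v
        rw [map_sub, LinearMap.sub_apply, map_sub]
        linarith
      have hδu : u' - u = 0 := by
        have h1 := hδeq (u' - u)
        have h2 := hδK (p' - p)
        have h3 := hcoer (u' - u) hδK
        have h4 : a (u' - u) (u' - u) = 0 := by linarith
        have h5 : α₀ * ‖u' - u‖ ^ 2 ≤ 0 := by linarith
        have h6 : ‖u' - u‖ = 0 := stmt18.auxL6 hα₀ (norm_nonneg (u' - u)) h5
        simpa [norm_eq_zero] using h6
      have hδp : p' - p = 0 := by
        have h1 : ∀ v : V, b v (p' - p) = 0 := by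
          intro v
          have := hδeq v
          rw [hδu, map_zero, LinearMap.zero_apply] at this
          linarith
        have h2 : Bt (p' - p) = 0 := by
          have h3 : ⟪Bt (p' - p), Bt (p' - p)⟫_ℝ = 0 := by
            rw [hBt]; exact h1 _
          exact inner_self_eq_zero.mp h3
        exact hBtinj _ h2
      have e1 : u' = u := by rwa [sub_eq_zero] at hδu
      have e2 : p' = p := by rwa [sub_eq_zero] at hδp
      rw [e1, e2]
end
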